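/- Let X be a separable complex Banach space. The set of all contractions T ∈ 𝔅₁(X) such that ‖Tⁿx‖ → 0 as n → ∞ for every x ∈ X is a dense G_δ subset of (𝔅₁(X), SOT); in particular, a typical T ∈ (𝔅₁(X), SOT) satisfies ‖Tⁿx‖ → 0 for all x ∈ X. -/

import Mathlib

set_option maxHeartbeats 1000000


open Topology Filter

noncomputable section

variable (X : Type*) [NormedAddCommGroup X] [NormedSpace ℂ X]

/-- The closed unit ball of the space of bounded linear operators on `X`. -/
abbrev Ball1 : Type _ := {T : X →L[ℂ] X // ‖T‖ ≤ 1}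

/-- The strong operator topology on the unit ball: the topology of pointwise
norm-convergence of operators. -/
def sot : TopologicalSpace (Ball1 X) :=
  TopologicalSpace.induced (fun T => (T.1 : X → X)) inferInstance

end

section aux

variable {X : Type*} [NormedAddCommGroup X] [NormedSpace ℂ X]

/-- Powers of a contraction are contractions (pointwise form). -/
lemma ball1_pow_apply_le (T : Ball1 X) (m : ℕ) (z : X) : ‖(T.1 ^ m) z‖ ≤ ‖z‖ := by
  induction m generalizing z with
  | zero => simp
  | succ m ih =>
    have h1 : (T.1 ^ (m + 1)) z = (T.1 ^ m) (T.1 z) := by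
      rw [pow_succ]; rfl
    rw [h1]
    calc ‖(T.1 ^ m) (T.1 z)‖ ≤ ‖T.1 z‖ := ih _
      _ ≤ ‖T.1‖ * ‖z‖ := T.1.le_opNorm z
      _ ≤ 1 * ‖z‖ := mul_le_mul_of_nonneg_right T.2 (norm_nonneg z)
      _ = ‖z‖ := one_mul _

/-- Evaluation at a point is SOT-continuous. -/
lemma sot_continuous_eval (x : X) :
    @Continuous _ _ (sot X) _ (fun T : Ball1 X => T.1 x) := by
  letI : TopologicalSpace (Ball1 X) := sot X
  have h1 : Continuous (fun T : Ball1 X => (T.1 : X → X)) := continuous_induced_dom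
  exact (continuous_apply x).comp h1

/-- On the unit ball, `T ↦ T (g T)` is SOT-continuous when `g` is. -/
lemma sot_continuous_apply_comp {g : Ball1 X → X}
    (hg : @Continuous _ _ (sot X) _ g) :
    @Continuous _ _ (sot X) _ (fun T : Ball1 X => T.1 (g T)) := by
  letI : TopologicalSpace (Ball1 X) := sot X
  rw [continuous_iff_continuousAt]
  intro T₀
  rw [ContinuousAt, Metric.tendsto_nhds]
  intro ε hε
  have h1 : ∀ᶠ T : Ball1 X in nhds T₀, ‖g T - g T₀‖ < ε / 2 := by
    have := hg.continuousAt (x := T₀)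
    rw [ContinuousAt, Metric.tendsto_nhds] at this
    filter_upwards [this (ε / 2) (by linarith)] with T hT
    rwa [dist_eq_norm] at hT
  have h2 : ∀ᶠ T : Ball1 X in nhds T₀, ‖T.1 (g T₀) - T₀.1 (g T₀)‖ < ε / 2 := by
    have := (sot_continuous_eval (g T₀)).continuousAt (x := T₀)
    rw [ContinuousAt, Metric.tendsto_nhds] at this
    filter_upwards [this (ε / 2) (by linarith)] with T hT
    rwa [dist_eq_norm] at hT
  filter_upwards [h1, h2] with T hT1 hT2
  rw [dist_eq_norm]
  calc ‖T.1 (g T) - T₀.1 (g T₀)‖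
      ≤ ‖T.1 (g T) - T.1 (g T₀)‖ + ‖T.1 (g T₀) - T₀.1 (g T₀)‖ := by
        simpa using norm_sub_le_norm_sub_add_norm_sub (T.1 (g T)) (T.1 (g T₀)) (T₀.1 (g T₀))
    _ ≤ ‖g T - g T₀‖ + ‖T.1 (g T₀) - T₀.1 (g T₀)‖ := by
        have h3 : ‖T.1 (g T) - T.1 (g T₀)‖ ≤ ‖g T - g T₀‖ := by
          rw [← map_sub]
          simpa using ball1_pow_apply_le T 1 (g T - g T₀)
        exact add_le_add h3 (le_refl _)
    _ < ε / 2 + ε / 2 := add_lt_add hT1 hT2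
    _ = ε := by ring

/-- `T ↦ Tⁿ x` is SOT-continuous. -/
lemma sot_continuous_pow_apply (n : ℕ) (x : X) :
    @Continuous _ _ (sot X) _ (fun T : Ball1 X => (T.1 ^ n) x) := by
  letI : TopologicalSpace (Ball1 X) := sot X
  induction n with
  | zero => simpa using continuous_const (y := x)
  | succ n ih =>
    have h : (fun T : Ball1 X => (T.1 ^ (n + 1)) x)
        = fun T : Ball1 X => T.1 ((T.1 ^ n) x) := by
      funext T; rw [pow_succ']; rfl
    rw [h]
    exact sot_continuous_apply_comp ih

end aux

/-- Let `X` be a separable complex Banach space. The set of contractions `T` such that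
`‖Tⁿ x‖ → 0` for every `x ∈ X` is a dense `G_δ` subset of `(𝔅₁(X), SOT)`; in particular
it is comeager, i.e. a typical `T ∈ (𝔅₁(X), SOT)` satisfies `‖Tⁿ x‖ → 0` for all `x`. -/
theorem typical_contraction_orbits_tend_to_zero
    (X : Type*) [NormedAddCommGroup X] [NormedSpace ℂ X] [CompleteSpace X]
    [TopologicalSpace.SeparableSpace X] :
    @Dense _ (sot X)
      {T : Ball1 X | ∀ x : X, Tendsto (fun n : ℕ => ‖(T.1 ^ n) x‖) atTop (nhds 0)} ∧
    @IsGδ _ (sot X)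
      {T : Ball1 X | ∀ x : X, Tendsto (fun n : ℕ => ‖(T.1 ^ n) x‖) atTop (nhds 0)} ∧
    {T : Ball1 X | ∀ x : X, Tendsto (fun n : ℕ => ‖(T.1 ^ n) x‖) atTop (nhds 0)}
      ∈ @residual _ (sot X) := by
  letI : TopologicalSpace (Ball1 X) := sot X
  set S := {T : Ball1 X | ∀ x : X, Tendsto (fun n : ℕ => ‖(T.1 ^ n) x‖) atTop (nhds 0)}
    with hS
  obtain ⟨D, Dcount, Ddense⟩ := TopologicalSpace.exists_countable_dense X
  -- the set as a countable intersection of open sets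
  have hSeq : S = ⋂ y ∈ D, ⋂ k : ℕ, ⋃ n : ℕ,
      {T : Ball1 X | ‖(T.1 ^ n) y‖ < 1 / ((k : ℝ) + 1)} := by
    ext T
    simp only [hS, Set.mem_setOf_eq, Set.mem_iInter, Set.mem_iUnion]
    constructor
    · intro h y _ k
      have hpos : (0 : ℝ) < 1 / ((k : ℝ) + 1) := by positivity
      have := (h y).eventually (eventually_lt_nhds hpos)
      exact this.exists
    · intro h x
      rw [Metric.tendsto_atTop]
      intro ε hε
      obtain ⟨y, hyD, hxy⟩ := Ddense.exists_dist_lt x (show (0:ℝ) < ε / 2 by linarith)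
      obtain ⟨k, hk⟩ := exists_nat_one_div_lt (show (0:ℝ) < ε / 2 by linarith)
      obtain ⟨n, hn⟩ := h y hyD k
      refine ⟨n, fun m hm => ?_⟩
      have hTm : ‖(T.1 ^ m) y‖ ≤ ‖(T.1 ^ n) y‖ := by
        have h1 : T.1 ^ m = T.1 ^ (m - n) * T.1 ^ n := by
          rw [← pow_add, Nat.sub_add_cancel hm]
        rw [h1]
        exact ball1_pow_apply_le T (m - n) ((T.1 ^ n) y)
      have hxy' : ‖(T.1 ^ m) x - (T.1 ^ m) y‖ ≤ ‖x - y‖ := by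
        rw [← map_sub]
        exact ball1_pow_apply_le T m (x - y)
      have hdxy : ‖x - y‖ < ε / 2 := by rwa [dist_eq_norm] at hxy
      have hbound : ‖(T.1 ^ m) x‖ < ε := by
        calc ‖(T.1 ^ m) x‖
            ≤ ‖(T.1 ^ m) x - (T.1 ^ m) y‖ + ‖(T.1 ^ m) y‖ := by
              simpa using norm_add_le ((T.1 ^ m) x - (T.1 ^ m) y) ((T.1 ^ m) y)
          _ ≤ ‖x - y‖ + ‖(T.1 ^ n) y‖ := add_le_add hxy' hTm
          _ < ε / 2 + 1 / ((k : ℝ) + 1) := by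
              exact add_lt_add_of_lt_of_le hdxy hn.le
          _ < ε / 2 + ε / 2 := by linarith
          _ = ε := by ring
      rw [Real.dist_eq, sub_zero, abs_of_nonneg (norm_nonneg _)]
      exact hbound
  -- Gδ
  have hGδ : IsGδ S := by
    rw [hSeq]
    refine .biInter Dcount fun y _ => .iInter fun k => IsOpen.isGδ ?_
    refine isOpen_iUnion fun n => ?_
    have hc : Continuous (fun T : Ball1 X => ‖(T.1 ^ n) y‖) :=
      continuous_norm.comp (sot_continuous_pow_apply n y)
    exact isOpen_lt hc continuous_const
  -- Dense
  have hDense : Dense S := by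
    intro T₀
    set c : ℕ → ℝ := fun j => 1 - 1 / ((j : ℝ) + 1) with hc
    have hc0 : ∀ j, 0 ≤ c j := by
      intro j
      have : 1 / ((j : ℝ) + 1) ≤ 1 := by
        rw [div_le_one (by positivity)]
        simp
      simp only [hc]; linarith
    have hc1 : ∀ j, c j < 1 := by
      intro j
      have : 0 < 1 / ((j : ℝ) + 1) := by positivity
      simp only [hc]; linarith
    have hnorm : ∀ j, ‖((c j : ℂ)) • T₀.1‖ ≤ 1 := by
      intro j
      calc ‖((c j : ℂ)) • T₀.1‖ ≤ ‖(c j : ℂ)‖ * ‖T₀.1‖ := ContinuousLinearMap.opNorm_smul_le _ _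
        _ ≤ 1 * 1 := by
            refine mul_le_mul ?_ T₀.2 (norm_nonneg _) zero_le_one
            rw [Complex.norm_real, Real.norm_eq_abs, abs_of_nonneg (hc0 j)]
            exact (hc1 j).le
        _ = 1 := one_mul 1
    set g : ℕ → Ball1 X := fun j => ⟨((c j : ℂ)) • T₀.1, hnorm j⟩ with hg
    -- each g j belongs to S
    have hgS : ∀ j, g j ∈ S := by
      intro j x
      have key : ∀ m : ℕ, ‖((g j).1 ^ m) x‖ ≤ (c j) ^ m * ‖x‖ := by
        intro m
        have h1 : (g j).1 ^ m = ((c j : ℂ)) ^ m • T₀.1 ^ m := by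
          simp only [hg]
          exact smul_pow _ _ _
        rw [h1]
        have : ‖(((c j : ℂ)) ^ m • T₀.1 ^ m) x‖ = ‖(c j : ℂ)‖ ^ m * ‖(T₀.1 ^ m) x‖ := by
          rw [ContinuousLinearMap.smul_apply, norm_smul, norm_pow]
        rw [this, Complex.norm_real, Real.norm_eq_abs, abs_of_nonneg (hc0 j)]
        exact mul_le_mul_of_nonneg_left (ball1_pow_apply_le T₀ m x)
          (pow_nonneg (hc0 j) m)
      have hlim : Tendsto (fun m : ℕ => (c j) ^ m * ‖x‖) atTop (nhds 0) := by
        have := tendsto_pow_atTop_nhds_zero_of_lt_one (hc0 j) (hc1 j)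
        simpa using this.mul_const ‖x‖
      exact squeeze_zero (fun m => norm_nonneg _) key hlim
    -- g tends to T₀ in SOT
    have hgT : Tendsto g atTop (nhds T₀) := by
      rw [show (nhds T₀ : Filter (Ball1 X))
          = Filter.comap (fun T : Ball1 X => (T.1 : X → X))
              (nhds (T₀.1 : X → X)) from nhds_induced _ _,
        tendsto_comap_iff]
      rw [tendsto_pi_nhds]
      intro x
      have hcx : Tendsto (fun j : ℕ => (c j : ℂ)) atTop (nhds 1) := by
        have h1 : Tendsto c atTop (nhds 1) := by
          have : Tendsto (fun n : ℕ => 1 / ((n : ℝ) + 1)) atTop (𝓝 0) :=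
            tendsto_one_div_add_atTop_nhds_zero_nat
          have h2 := (tendsto_const_nhds (x := (1:ℝ)) (f := atTop (α := ℕ))).sub this
          simpa [hc] using h2
        have := (Complex.continuous_ofReal.tendsto 1).comp h1
        simpa [Function.comp_def] using this
      have : Tendsto (fun j : ℕ => (c j : ℂ) • T₀.1 x) atTop (nhds ((1:ℂ) • T₀.1 x)) :=
        hcx.smul_const _
      simpa [Function.comp, hg] using this
    exact mem_closure_of_tendsto hgT (Eventually.of_forall hgS)
  exact ⟨hDense, hGδ, residual_of_dense_Gδ hGδ hDense⟩
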